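/- arXiv:2303.07008 — 3 statements merged into one kernel-verified Lean document; each statement's English description precedes it below -/
import Mathlib

section
/- Let H be a nonnegative J×J matrix with spectral radius less than 1, and suppose there is a walk in H from ℓ to j, i.e., (H^s)_{jℓ} > 0 for some s ≥ 0. If H' agrees with H everywhere except H'_{ℓm} > H_{ℓm} for some m, and H' has spectral radius less than 1, then (∑_t (H')^t)_{jm'} > (∑_t H^t)_{jm'} for m' = m, in particular the row sum ∑_k (∑_t (H')^t)_{jk} strictly exceeds ∑_k (∑_t H^t)_{jk}. -/
open Matrix BigOperators Filter Topology
open scoped NNReal ENNReal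

attribute [local instance] Matrix.linftyOpNormedRing Matrix.linftyOpNormedAlgebra

lemma stmt2_entry_le_norm {J : ℕ} (M : Matrix (Fin J) (Fin J) ℂ) (i j : Fin J) :
    ‖M i j‖ ≤ ‖M‖ := by
  rw [Matrix.linfty_opNorm_def]
  calc ‖M i j‖ ≤ ((∑ k, ‖M i k‖₊ : ℝ≥0) : ℝ) := by
        push_cast
        exact Finset.single_le_sum (f := fun k => ‖M i k‖)
          (fun k _ => norm_nonneg _) (Finset.mem_univ j)
    _ ≤ _ := by
        exact_mod_cast Finset.le_sup (f := fun i => ∑ k, ‖M i k‖₊) (Finset.mem_univ i)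

lemma stmt2_summable_entries {J : ℕ} (H : Matrix (Fin J) (Fin J) ℝ)
    (hspec : ∀ μ ∈ spectrum ℂ (H.map (fun x : ℝ => (x : ℂ))), ‖μ‖ < 1) :
    ∀ a b : Fin J, Summable fun t : ℕ => (H ^ t) a b := by
  intro a b
  haveI : CompleteSpace (Matrix (Fin J) (Fin J) ℂ) :=
    inferInstance
  set A : Matrix (Fin J) (Fin J) ℂ := H.map (fun x : ℝ => (x : ℂ)) with hA
  have hmap : ∀ n : ℕ, (H ^ n).map (fun x : ℝ => (x : ℂ)) = A ^ n := by
    intro n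
    simp only [hA, show (fun x : ℝ => (x : ℂ)) = ⇑Complex.ofRealHom from rfl,
      ← RingHom.mapMatrix_apply, map_pow]
  have hrad : spectralRadius ℂ A < 1 := by
    rcases (spectrum ℂ A).eq_empty_or_nonempty with h | h
    · rw [spectralRadius]
      simp [h]
    · have := spectrum.spectralRadius_lt_of_forall_lt_of_nonempty h (r := 1)
        (fun k hk => by
          have hk1 := hspec k hk
          exact_mod_cast hk1)
      simpa using this
  obtain ⟨r, hr1, hr2⟩ := ENNReal.lt_iff_exists_nnreal_btwn.mp hrad
  have hten := spectrum.pow_nnnorm_pow_one_div_tendsto_nhds_spectralRadius A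
  have hev : ∀ᶠ n : ℕ in atTop, (‖A ^ n‖₊ : ℝ≥0∞) ^ (1 / (n : ℝ)) < (r : ℝ≥0∞) :=
    hten.eventually_lt_const hr1
  have hev' : ∀ᶠ n : ℕ in atTop, ‖(H ^ n) a b‖ ≤ (r : ℝ) ^ n := by
    filter_upwards [hev, eventually_ge_atTop 1] with n hn hn1
    have hn0 : (n : ℝ) ≠ 0 := Nat.cast_ne_zero.mpr (by omega)
    have h1 : (‖A ^ n‖₊ : ℝ≥0∞) < (r : ℝ≥0∞) ^ (n : ℝ) := by
      have := ENNReal.rpow_lt_rpow hn (by positivity : (0:ℝ) < (n : ℝ))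
      rwa [← ENNReal.rpow_mul, one_div, inv_mul_cancel₀ hn0, ENNReal.rpow_one] at this
    have h2 : (‖A ^ n‖₊ : ℝ) ≤ (r : ℝ) ^ n := by
      rw [ENNReal.rpow_natCast] at h1
      have : ‖A ^ n‖₊ ≤ r ^ n := by
        exact_mod_cast h1.le.trans_eq (ENNReal.coe_pow r n).symm
      exact_mod_cast this
    have h3 : ‖(H ^ n) a b‖ ≤ ‖A ^ n‖ := by
      have he : (A ^ n) a b = ((H ^ n) a b : ℂ) := by rw [← hmap n]; rfl
      calc ‖(H ^ n) a b‖ = ‖(A ^ n) a b‖ := by rw [he, Complex.norm_real]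
        _ ≤ ‖A ^ n‖ := stmt2_entry_le_norm _ a b
    exact h3.trans h2
  exact Summable.of_norm_bounded_eventually_nat (g := fun n => (r : ℝ) ^ n)
    (summable_geometric_of_lt_one r.coe_nonneg (by exact_mod_cast hr2)) hev'

lemma stmt2_pow_nonneg {J : ℕ} (H : Matrix (Fin J) (Fin J) ℝ)
    (hpos : ∀ i k, 0 ≤ H i k) : ∀ (t : ℕ) (a b : Fin J), 0 ≤ (H ^ t) a b := by
  intro t
  induction t with
  | zero => intro a b; by_cases h : a = b <;> simp [pow_zero, Matrix.one_apply, h]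
  | succ s ih =>
      intro a b
      rw [pow_succ, Matrix.mul_apply]
      exact Finset.sum_nonneg fun k _ => mul_nonneg (ih a k) (hpos k b)

lemma stmt2_pow_mono {J : ℕ} (H H' : Matrix (Fin J) (Fin J) ℝ)
    (hpos : ∀ i k, 0 ≤ H i k) (hle : ∀ p q, H p q ≤ H' p q) :
    ∀ (t : ℕ) (a b : Fin J), (H ^ t) a b ≤ (H' ^ t) a b := by
  intro t
  induction t with
  | zero => intro a b; simp [pow_zero]
  | succ s ih =>
      intro a b
      rw [pow_succ, pow_succ, Matrix.mul_apply, Matrix.mul_apply]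
      refine Finset.sum_le_sum fun k _ => mul_le_mul (ih a k) (hle k b) (hpos k b) ?_
      exact (stmt2_pow_nonneg H hpos s a k).trans (ih a k)

/-- if there is a walk in `H` from `ℓ` to `j` (i.e. `(H^s)_{jℓ} > 0`
for some `s ≥ 0`) and `H'` agrees with `H` except for a strictly larger entry
`H'_{ℓm} > H_{ℓm}`, then the `(j,m)` entry of the Neumann series strictly
increases, and in particular the `j`-th row sum strictly increases. -/
theorem stmt_2 {J : ℕ} (H H' : Matrix (Fin J) (Fin J) ℝ) (j ℓ m : Fin J)
    (hpos : ∀ i k, 0 ≤ H i k) (hpos' : ∀ i k, 0 ≤ H' i k)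
    (hspec : ∀ μ ∈ spectrum ℂ (H.map (fun x : ℝ => (x : ℂ))), ‖μ‖ < 1)
    (hspec' : ∀ μ ∈ spectrum ℂ (H'.map (fun x : ℝ => (x : ℂ))), ‖μ‖ < 1)
    (hwalk : ∃ s : ℕ, 0 < (H ^ s) j ℓ)
    (hagree : ∀ p q : Fin J, (p, q) ≠ (ℓ, m) → H' p q = H p q)
    (hbigger : H ℓ m < H' ℓ m) :
    (∑' t : ℕ, H ^ t) j m < (∑' t : ℕ, H' ^ t) j m ∧
      ∑ k, (∑' t : ℕ, H ^ t) j k < ∑ k, (∑' t : ℕ, H' ^ t) j k := by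
  obtain ⟨s, hs⟩ := hwalk
  have hle : ∀ p q, H p q ≤ H' p q := by
    intro p q
    by_cases h : (p, q) = (ℓ, m)
    · obtain ⟨h1, h2⟩ := Prod.mk.injEq .. ▸ h
      subst h1; subst h2
      exact hbigger.le
    · exact (hagree p q h).ge
  have hsum := stmt2_summable_entries H hspec
  have hsum' := stmt2_summable_entries H' hspec'
  have hmono := stmt2_pow_mono H H' hpos hle
  -- strict inequality at step s+1
  have hstrict : (H ^ (s + 1)) j m < (H' ^ (s + 1)) j m := by
    rw [pow_succ, pow_succ, Matrix.mul_apply, Matrix.mul_apply]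
    have hstep : ∀ k ∈ Finset.univ, (H ^ s) j k * H k m ≤ (H' ^ s) j k * H' k m :=
      fun k _ => mul_le_mul (hmono s j k) (hle k m) (hpos k m)
        ((stmt2_pow_nonneg H hpos s j k).trans (hmono s j k))
    refine Finset.sum_lt_sum hstep ⟨ℓ, Finset.mem_univ ℓ, ?_⟩
    calc (H ^ s) j ℓ * H ℓ m < (H ^ s) j ℓ * H' ℓ m :=
          mul_lt_mul_of_pos_left hbigger hs
      _ ≤ (H' ^ s) j ℓ * H' ℓ m :=
          mul_le_mul_of_nonneg_right (hmono s j ℓ) (hpos' ℓ m)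
  -- matrix-level summability
  have hsumM : Summable (fun t : ℕ => H ^ t) :=
    Pi.summable.mpr fun a => Pi.summable.mpr fun b => hsum a b
  have hsumM' : Summable (fun t : ℕ => H' ^ t) :=
    Pi.summable.mpr fun a => Pi.summable.mpr fun b => hsum' a b
  have happ : ∀ k, (∑' t : ℕ, H ^ t) j k = ∑' t : ℕ, (H ^ t) j k := by
    intro k
    erw [tsum_apply hsumM, tsum_apply]
    exact Pi.summable.mpr fun b => hsum j b
  have happ' : ∀ k, (∑' t : ℕ, H' ^ t) j k = ∑' t : ℕ, (H' ^ t) j k := by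
    intro k
    erw [tsum_apply hsumM', tsum_apply]
    exact Pi.summable.mpr fun b => hsum' j b
  have hlt : ∀ k, (∑' t : ℕ, H ^ t) j k ≤ (∑' t : ℕ, H' ^ t) j k := by
    intro k
    rw [happ, happ']
    exact Summable.tsum_le_tsum (fun t => hmono t j k) (hsum j k) (hsum' j k)
  have hmain : (∑' t : ℕ, H ^ t) j m < (∑' t : ℕ, H' ^ t) j m := by
    rw [happ, happ']
    exact Summable.tsum_lt_tsum (fun t => hmono t j m) hstrict (hsum j m) (hsum' j m)
  exact ⟨hmain, Finset.sum_lt_sum (fun k _ => hlt k) ⟨m, Finset.mem_univ m, hmain⟩⟩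
end

section
/- Let α > γ > 0 and let C_A, C_B > 0 be given. The unique solution Y_A > 0 of the equation Y_A = ((α − γ·Y_A)·C_A) / ((α − γ/Y_A)·C_B) with Y_B = 1/Y_A is Y_A = (α·(C_A/C_B) + γ)/(α + γ·(C_A/C_B)). -/
/-! Clearing denominators, `Y = ((α - γY)C_A)/((α - γ/Y)C_B)` becomes the linear equation
`Y (α C_B + γ C_A) = α C_A + γ C_B`, whose solution is the closed form. The only subtlety is the
degenerate point `α Y = γ`, where the right-hand side is `x / 0 = 0`: there neither side holds,
since the linear equation would force `γ² C_A = α² C_A`. -/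

section Field

variable {K : Type*} [Field K] {α γ CA CB Y : K}

theorem not_linear_of_mul_eq (hCA : CA ≠ 0) (hαγ : α ^ 2 ≠ γ ^ 2) (hαY : α * Y = γ) :
    Y * (α * CB + γ * CA) ≠ α * CA + γ * CB := by
  intro h
  have hsq : (α ^ 2 - γ ^ 2) * CA = 0 := by linear_combination -α * h + (α * CB + γ * CA) * hαY
  exact hαγ (sub_eq_zero.mp ((mul_eq_zero.mp hsq).resolve_right hCA))

theorem eq_fixedPointRhs_iff_linear (hY : Y ≠ 0) (hCA : CA ≠ 0) (hCB : CB ≠ 0)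
    (hαγ : α ^ 2 ≠ γ ^ 2) :
    Y = ((α - γ * Y) * CA) / ((α - γ / Y) * CB) ↔ Y * (α * CB + γ * CA) = α * CA + γ * CB := by
  by_cases hd : α - γ / Y = 0
  · have hαY : α * Y = γ := by field_simp at hd; linear_combination hd
    simp only [hd, zero_mul, div_zero, hY, false_iff]
    exact not_linear_of_mul_eq hCA hαγ hαY
  · rw [eq_div_iff (mul_ne_zero hd hCB)]
    field_simp
    constructor <;> intro h <;> linear_combination h

theorem eq_closedForm_iff_linear (hCB : CB ≠ 0) (hden : α * CB + γ * CA ≠ 0) :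
    Y = (α * (CA / CB) + γ) / (α + γ * (CA / CB)) ↔ Y * (α * CB + γ * CA) = α * CA + γ * CB := by
  have hform : (α * (CA / CB) + γ) / (α + γ * (CA / CB)) = (α * CA + γ * CB) / (α * CB + γ * CA) := by
    field_simp
  rw [hform, eq_div_iff hden]

end Field

/-- for `α > γ > 0` and `C_A, C_B > 0`, the unique positive
solution of `Y_A = ((α − γY_A)C_A)/((α − γ/Y_A)C_B)` is
`Y_A = (α(C_A/C_B) + γ)/(α + γ(C_A/C_B))`. -/
theorem stmt_5 (α γ CA CB : ℝ) (hγ : 0 < γ) (hαγ : γ < α)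
    (hCA : 0 < CA) (hCB : 0 < CB) :
    ∀ Y : ℝ, 0 < Y →
      (Y = ((α - γ * Y) * CA) / ((α - γ / Y) * CB) ↔
        Y = (α * (CA / CB) + γ) / (α + γ * (CA / CB))) := by
  intro Y hY
  have hα : 0 < α := hγ.trans hαγ
  have hsq : α ^ 2 ≠ γ ^ 2 := (pow_lt_pow_left₀ hαγ hγ.le two_ne_zero).ne'
  have hden : α * CB + γ * CA ≠ 0 := by positivity
  rw [eq_fixedPointRhs_iff_linear hY.ne' hCA.ne' hCB.ne' hsq, eq_closedForm_iff_linear hCB.ne' hden]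
end

section
/- Let α > γ > 0 and P_A, P_B ≥ 0 (exogenous prestige). Given positive group average centralities 𝒞_θ, 𝒞_{−θ}, the unique solution of Y_θ = ((α − γY_θ)𝒞_θ + P_θ)/((α − γ/Y_θ)𝒞_{−θ} + P_{−θ}) with Y_{−θ} = 1/Y_θ is Y_θ = (α𝒞_θ + γ𝒞_{−θ} + P_θ)/(α𝒞_{−θ} + γ𝒞_θ + P_{−θ}), and the resulting equilibrium consumption x_j* = (α − γY_θ)·C_j is strictly decreasing in P_θ and strictly increasing in P_{−θ} (assuming α𝒞_{−θ} + γ𝒞_θ + P_{−θ} > 0 and α − γY_θ > 0). -/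
/-!
Multiplying the fixed-point equation `Y = A / D` by its denominator, the terms in `1 / Y` and `Y`
rearrange so that `Y * D - A = Y * M - N`, where `N / M` is the closed form; hence the equation
is linear in `Y` and has the single solution `N / M`. The denominator `D` cannot vanish at a
solution: `D = 0` and `A = 0` together would force `Y ≤ γ / α < 1 < α / γ ≤ Y`.
Consumption `(α - γ Y) C_j` is decreasing in `Y`, and the closed form is increasing in `P_θ`
and decreasing in `P_{-θ}`.
-/

lemma eq_div_iff_mul_eq_of_ne_zero_or {K : Type*} [Field K] {y a d : K} (hy : y ≠ 0)
    (had : a ≠ 0 ∨ d ≠ 0) : y = a / d ↔ y * d = a := by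
  by_cases hd : d = 0
  · have ha : a ≠ 0 := had.resolve_right (not_not.mpr hd)
    simp only [hd, div_zero, mul_zero]
    exact ⟨fun h => absurd h hy, fun h => absurd h.symm ha⟩
  · exact eq_div_iff hd

section Prestige

variable {α γ Cθ Cmθ P Pm Y : ℝ}

lemma prestige_mul_sub_eq (hY : Y ≠ 0) :
    Y * ((α - γ / Y) * Cmθ + Pm) - ((α - γ * Y) * Cθ + P) =
      Y * (α * Cmθ + γ * Cθ + Pm) - (α * Cθ + γ * Cmθ + P) := by
  field_simp
  ring

lemma prestige_num_pos_or_den_pos (hαγ : γ < α) (hCθ : 0 < Cθ) (hCmθ : 0 < Cmθ)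
    (hP : 0 ≤ P) (hPm : 0 ≤ Pm) (hY : 0 < Y) :
    0 < (α - γ * Y) * Cθ + P ∨ 0 < (α - γ / Y) * Cmθ + Pm := by
  by_contra! h
  have hαY : α ≤ γ * Y := by nlinarith [h.1]
  have hαY' : α * Y ≤ γ := by
    have : α ≤ γ / Y := by nlinarith [h.2]
    rwa [le_div_iff₀ hY] at this
  nlinarith

theorem prestige_fixedPoint_iff (hγ : 0 < γ) (hαγ : γ < α) (hCθ : 0 < Cθ) (hCmθ : 0 < Cmθ)
    (hP : 0 ≤ P) (hPm : 0 ≤ Pm) (hY : 0 < Y) :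
    Y = ((α - γ * Y) * Cθ + P) / ((α - γ / Y) * Cmθ + Pm) ↔
      Y = (α * Cθ + γ * Cmθ + P) / (α * Cmθ + γ * Cθ + Pm) := by
  have hM : 0 < α * Cmθ + γ * Cθ + Pm := by nlinarith
  have hAD := (prestige_num_pos_or_den_pos hαγ hCθ hCmθ hP hPm hY).imp ne_of_gt ne_of_gt
  rw [eq_div_iff_mul_eq_of_ne_zero_or hY.ne' hAD, eq_div_iff hM.ne', ← sub_eq_zero,
    prestige_mul_sub_eq hY.ne', sub_eq_zero]

lemma strictAnti_consumption {c : ℝ} (hγ : 0 < γ) (hc : 0 < c) :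
    StrictAnti fun y : ℝ => (α - γ * y) * c :=
  fun _ _ hy => mul_lt_mul_of_pos_right (by nlinarith) hc

end Prestige

/-- exogenous prestige: the unique positive solution of
`Y_θ = ((α − γY_θ)𝒞_θ + P_θ)/((α − γ/Y_θ)𝒞_{−θ} + P_{−θ})` is
`Y_θ = (α𝒞_θ + γ𝒞_{−θ} + P_θ)/(α𝒞_{−θ} + γ𝒞_θ + P_{−θ})`, and the resulting
consumption `x_j* = (α − γY_θ)·C_j` is strictly decreasing in `P_θ` and
strictly increasing in `P_{−θ}`. -/
theorem stmt_15 (α γ Cθ Cmθ Cj : ℝ) (hγ : 0 < γ) (hαγ : γ < α)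
    (hCθ : 0 < Cθ) (hCmθ : 0 < Cmθ) (hCj : 0 < Cj) :
    let Ystar : ℝ → ℝ → ℝ := fun P Pm =>
      (α * Cθ + γ * Cmθ + P) / (α * Cmθ + γ * Cθ + Pm)
    (∀ P Pm : ℝ, 0 ≤ P → 0 ≤ Pm → ∀ Y : ℝ, 0 < Y →
        (Y = ((α - γ * Y) * Cθ + P) / ((α - γ / Y) * Cmθ + Pm) ↔
          Y = Ystar P Pm)) ∧
      (∀ P P' Pm : ℝ, 0 ≤ P → P < P' → 0 ≤ Pm →
        (α - γ * Ystar P' Pm) * Cj < (α - γ * Ystar P Pm) * Cj) ∧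
      (∀ P Pm Pm' : ℝ, 0 ≤ P → 0 ≤ Pm → Pm < Pm' →
        (α - γ * Ystar P Pm) * Cj < (α - γ * Ystar P Pm') * Cj) := by
  intro Ystar
  have hα : 0 < α := hγ.trans hαγ
  refine ⟨fun P Pm hP hPm Y hY => prestige_fixedPoint_iff hγ hαγ hCθ hCmθ hP hPm hY,
    fun P P' Pm hP hPP' hPm => strictAnti_consumption hγ hCj ?_,
    fun P Pm Pm' hP hPm hPmPm' => strictAnti_consumption hγ hCj ?_⟩
  · exact div_lt_div_of_pos_right (by linarith) (by positivity)
  · exact div_lt_div_of_pos_left (by positivity) (by positivity) (by linarith)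
end
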